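/- arXiv:1811.03197 — 3 statements merged into one kernel-verified Lean document; each statement's English description precedes it below -/
import Mathlib

section
/- Let n be a natural number, b > 0, and let c : (Fin n → ℝ) → ℝ be a bounded function. Then for all adjacent streams σ, σ' (i.e. d(σ, σ') = 1), SS_{σ',b}(c) ≤ exp(b) · SS_{σ,b}(c). Hence smooth sensitivity is a b-smooth upper bound on local sensitivity. -/
/-!
Moving the base point from `σ` to an adjacent `σ'` changes every Hamming distance `d(·, τ)` by at
most one (triangle inequality), so each term `LS_τ(c) · exp(-b d(σ', τ))` of the supremum defining
`SS_{σ',b}(c)` is at most `exp b` times the corresponding term for `σ`. Since adjacency is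
symmetric, the two families of terms dominate each other, so they are bounded above simultaneously
and the bound passes to their suprema (both of which are the junk value `0` when unbounded).
-/

/-- Local sensitivity of `c` at `σ`: the supremum of `|c σ - c σ'|` over streams `σ'`
adjacent to `σ` (Hamming distance 1). -/
noncomputable def localSens {n : ℕ} (c : (Fin n → ℝ) → ℝ) (σ : Fin n → ℝ) : ℝ :=
  sSup {x : ℝ | ∃ σ' : Fin n → ℝ, hammingDist σ σ' = 1 ∧ x = |c σ - c σ'|}

/-- `b`-smooth sensitivity of `c` at `σ`: the supremum of
`LS_{σ'}(c) · exp(-b · d(σ, σ'))` over all streams `σ'`. -/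
noncomputable def smoothSens {n : ℕ} (b : ℝ) (c : (Fin n → ℝ) → ℝ) (σ : Fin n → ℝ) : ℝ :=
  sSup {x : ℝ | ∃ σ' : Fin n → ℝ, x = localSens c σ' * Real.exp (-(b * hammingDist σ σ'))}

theorem Real.iSup_le_mul_iSup {ι : Sort*} {f g : ι → ℝ} {k k' : ℝ} (hk : 0 ≤ k) (hk' : 0 ≤ k')
    (hg : ∀ i, 0 ≤ g i) (hfg : ∀ i, f i ≤ k * g i) (hgf : ∀ i, g i ≤ k' * f i) :
    ⨆ i, f i ≤ k * ⨆ i, g i := by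
  by_cases hbdd : BddAbove (Set.range g)
  · refine Real.iSup_le (fun i => (hfg i).trans ?_) (mul_nonneg hk (Real.iSup_nonneg hg))
    exact mul_le_mul_of_nonneg_left (le_ciSup hbdd i) hk
  · have hf : ¬BddAbove (Set.range f) := by
      rintro ⟨B, hB⟩
      refine hbdd ⟨k' * B, Set.forall_mem_range.2 fun i => (hgf i).trans ?_⟩
      exact mul_le_mul_of_nonneg_left (hB (Set.mem_range_self i)) hk'
    rw [Real.iSup_of_not_bddAbove hf, Real.iSup_of_not_bddAbove hbdd, mul_zero]

theorem exp_neg_mul_hammingDist_le {ι : Type*} [Fintype ι] {β : ι → Type*}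
    [∀ i, DecidableEq (β i)] {b : ℝ} (hb : 0 ≤ b) (x y z : ∀ i, β i) :
    Real.exp (-(b * hammingDist y z)) ≤
      Real.exp (b * hammingDist x y) * Real.exp (-(b * hammingDist x z)) := by
  rw [← Real.exp_add, Real.exp_le_exp]
  have htri : (hammingDist x z : ℝ) ≤ hammingDist x y + hammingDist y z := by
    exact_mod_cast hammingDist_triangle x y z
  nlinarith

theorem localSens_nonneg {n : ℕ} (c : (Fin n → ℝ) → ℝ) (σ : Fin n → ℝ) :
    0 ≤ localSens c σ :=
  Real.sSup_nonneg (by rintro x ⟨τ, -, rfl⟩; exact abs_nonneg _)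

theorem smoothSens_eq_iSup {n : ℕ} (b : ℝ) (c : (Fin n → ℝ) → ℝ) (σ : Fin n → ℝ) :
    smoothSens b c σ = ⨆ τ, localSens c τ * Real.exp (-(b * hammingDist σ τ)) := by
  simp only [smoothSens, iSup, Set.range, eq_comm]

theorem localSens_mul_exp_le_of_hammingDist_eq_one {n : ℕ} {b : ℝ} (hb : 0 ≤ b)
    (c : (Fin n → ℝ) → ℝ) {σ σ' : Fin n → ℝ} (hadj : hammingDist σ σ' = 1) (τ : Fin n → ℝ) :
    localSens c τ * Real.exp (-(b * hammingDist σ' τ)) ≤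
      Real.exp b * (localSens c τ * Real.exp (-(b * hammingDist σ τ))) := by
  have hexp := exp_neg_mul_hammingDist_le hb σ σ' τ
  rw [hadj, Nat.cast_one, mul_one] at hexp
  calc localSens c τ * Real.exp (-(b * hammingDist σ' τ))
      ≤ localSens c τ * (Real.exp b * Real.exp (-(b * hammingDist σ τ))) :=
        mul_le_mul_of_nonneg_left hexp (localSens_nonneg c τ)
    _ = Real.exp b * (localSens c τ * Real.exp (-(b * hammingDist σ τ))) := by ring

theorem smoothSens_smooth_general {n : ℕ} (b : ℝ) (hb : 0 < b)
    (c : (Fin n → ℝ) → ℝ)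
    (σ σ' : Fin n → ℝ) (hadj : hammingDist σ σ' = 1) :
    smoothSens b c σ' ≤ Real.exp b * smoothSens b c σ := by
  rw [smoothSens_eq_iSup, smoothSens_eq_iSup]
  exact Real.iSup_le_mul_iSup (Real.exp_pos b).le (Real.exp_pos b).le
    (fun τ => mul_nonneg (localSens_nonneg c τ) (Real.exp_pos _).le)
    (localSens_mul_exp_le_of_hammingDist_eq_one hb.le c hadj)
    (localSens_mul_exp_le_of_hammingDist_eq_one hb.le c (hammingDist_comm σ σ' ▸ hadj))

/-- Smooth sensitivity is a `b`-smooth upper bound: for adjacent streams `σ, σ'`,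
`SS_{σ',b}(c) ≤ exp(b) · SS_{σ,b}(c)`. -/
theorem smoothSens_smooth {n : ℕ} (b : ℝ) (hb : 0 < b)
    (c : (Fin n → ℝ) → ℝ) (M : ℝ) (hM : ∀ σ : Fin n → ℝ, |c σ| ≤ M)
    (σ σ' : Fin n → ℝ) (hadj : hammingDist σ σ' = 1) :
    smoothSens b c σ' ≤ Real.exp b * smoothSens b c σ :=
  smoothSens_smooth_general b hb c σ σ' hadj
end

section
/- (Light-tailed Chernoff bound on the outlier error) Let (Ω, 𝓕, ℙ) be a probability space, n a positive natural number, 0 < q ≤ 1, γ > 0, and let E₁, …, E_n : Ω → ℝ be independent identically distributed random variables each with law the mixture (1 − q)·δ_0 + q·Exp(γ). Then for every h with 0 < h < γ and every α ∈ ℝ, ℙ(∑_{i=1}^n Eᵢ ≥ α) ≤ (1 + q·h/(γ − h))^n / exp(h·α). -/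
/-!
The exponential moment of one outlier error is
`E[e^{hE}] = (1 - q) + q γ / (γ - h) = 1 + q h / (γ - h)`, finite exactly because `h < γ`.
By independence the exponential moment of the sum is its `n`-th power, and Markov's inequality
for `e^{h ∑ Eᵢ}` gives the bound.
-/

open MeasureTheory ProbabilityTheory Real Set

lemma lintegral_exp_mul_expMeasure {γ t : ℝ} (hγ : 0 < γ) (ht : t < γ) :
    ∫⁻ x, ENNReal.ofReal (exp (t * x)) ∂expMeasure γ = ENNReal.ofReal (γ / (γ - t)) := by
  have hdecay : t - γ < 0 := sub_neg.2 ht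
  have hdensity : (fun x ↦ exponentialPDF γ x * ENNReal.ofReal (exp (t * x))) =
      (Ici 0).indicator fun x ↦ ENNReal.ofReal (γ * exp ((t - γ) * x)) := by
    ext x
    by_cases hx : 0 ≤ x
    · rw [exponentialPDF_of_nonneg hx, indicator_of_mem (mem_Ici.2 hx),
        ← ENNReal.ofReal_mul (by positivity), mul_assoc, ← exp_add]
      ring_nf
    · rw [exponentialPDF_of_neg (not_le.1 hx), indicator_of_notMem (by simpa using hx), zero_mul]
  rw [show expMeasure γ = volume.withDensity (exponentialPDF γ) from rfl,
    lintegral_withDensity_eq_lintegral_mul _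
      (by exact (measurable_exponentialPDFReal γ).ennreal_ofReal) (by fun_prop)]
  simp only [Pi.mul_def]
  rw [hdensity, lintegral_indicator measurableSet_Ici, ← restrict_Ioi_eq_restrict_Ici,
    ← ofReal_integral_eq_lintegral_ofReal
      (((integrableOn_exp_mul_Ioi hdecay 0).const_mul γ))
      (Filter.Eventually.of_forall fun x ↦ by positivity),
    integral_const_mul, integral_exp_mul_Ioi hdecay]
  congr 1
  rw [mul_zero, exp_zero, neg_div, ← div_neg, neg_sub, mul_div_assoc', mul_one]

noncomputable def zeroExpMixture (q γ : ℝ) : Measure ℝ :=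
  ENNReal.ofReal (1 - q) • Measure.dirac 0 + ENNReal.ofReal q • expMeasure γ

lemma lintegral_exp_mul_zeroExpMixture {q γ t : ℝ} (hq0 : 0 ≤ q) (hq1 : q ≤ 1) (hγ : 0 < γ)
    (ht : t < γ) :
    ∫⁻ x, ENNReal.ofReal (exp (t * x)) ∂zeroExpMixture q γ =
      ENNReal.ofReal (1 + q * t / (γ - t)) := by
  have hγt : 0 < γ - t := sub_pos.2 ht
  rw [zeroExpMixture, lintegral_add_measure, lintegral_smul_measure, lintegral_smul_measure,
    lintegral_dirac, lintegral_exp_mul_expMeasure hγ ht, mul_zero, exp_zero, ENNReal.ofReal_one,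
    smul_eq_mul, smul_eq_mul, mul_one, ← ENNReal.ofReal_mul hq0,
    ← ENNReal.ofReal_add (by linarith) (by positivity)]
  congr 1
  field_simp
  ring

namespace ProbabilityTheory

variable {Ω : Type*} [MeasurableSpace Ω] {μ : Measure Ω}

-- No integrability hypothesis: when the exponential moment is infinite both sides are `0`.
lemma mgf_eq_toReal_lintegral {X : Ω → ℝ} (hX : AEMeasurable X μ) (t : ℝ) :
    mgf X μ t = (∫⁻ ω, ENNReal.ofReal (exp (t * X ω)) ∂μ).toReal :=
  integral_eq_lintegral_of_nonneg_ae (Filter.Eventually.of_forall fun _ ↦ (exp_pos _).le)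
    (by fun_prop)

lemma integrable_exp_mul_of_lintegral_ne_top {X : Ω → ℝ} {t : ℝ} (hX : AEMeasurable X μ)
    (h : ∫⁻ ω, ENNReal.ofReal (exp (t * X ω)) ∂μ ≠ ⊤) :
    Integrable (fun ω ↦ exp (t * X ω)) μ :=
  (lintegral_ofReal_ne_top_iff_integrable (by fun_prop)
    (Filter.Eventually.of_forall fun _ ↦ (exp_pos _).le)).1 h

theorem iIndepFun.measure_sum_ge_le_of_lintegral_exp_mul_eq {ι : Type*} [Fintype ι]
    [IsProbabilityMeasure μ] {X : ι → Ω → ℝ} (hindep : iIndepFun X μ)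
    (hmeas : ∀ i, Measurable (X i)) {t c : ℝ} (ht : 0 ≤ t) (hc : 0 ≤ c)
    (hmom : ∀ i, ∫⁻ ω, ENNReal.ofReal (exp (t * X i ω)) ∂μ = ENNReal.ofReal c) (α : ℝ) :
    μ {ω | α ≤ ∑ i, X i ω} ≤ ENNReal.ofReal (c ^ Fintype.card ι / exp (t * α)) := by
  have hmgf : ∀ i, mgf (X i) μ t = c := fun i ↦ by
    rw [mgf_eq_toReal_lintegral (hmeas i).aemeasurable, hmom i, ENNReal.toReal_ofReal hc]
  have hint : Integrable (fun ω ↦ exp (t * (∑ i, X i) ω)) μ :=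
    hindep.integrable_exp_mul_sum hmeas fun i _ ↦
      integrable_exp_mul_of_lintegral_ne_top (hmeas i).aemeasurable (by simp [hmom i])
  have hchernoff := measure_ge_le_exp_mul_mgf α ht hint
  rw [hindep.mgf_sum hmeas, Finset.prod_congr rfl fun i _ ↦ hmgf i, Finset.prod_const,
    Finset.card_univ] at hchernoff
  simp only [Finset.sum_apply] at hchernoff
  rw [← ofReal_measureReal]
  refine ENNReal.ofReal_le_ofReal (hchernoff.trans_eq ?_)
  rw [neg_mul, exp_neg, div_eq_mul_inv, mul_comm]

end ProbabilityTheory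

theorem light_tailed_chernoff_general {Ω : Type*} [MeasurableSpace Ω] (P : Measure Ω)
    [IsProbabilityMeasure P] (n : ℕ)
    (q γ : ℝ) (hq0 : 0 < q) (hq1 : q ≤ 1) (hγ : 0 < γ)
    (E : Fin n → Ω → ℝ) (hmeas : ∀ i, Measurable (E i))
    (hindep : iIndepFun E P)
    (hlaw : ∀ i, Measure.map (E i) P =
      ENNReal.ofReal (1 - q) • Measure.dirac (0 : ℝ) +
        ENNReal.ofReal q • ProbabilityTheory.expMeasure γ)
    (h α : ℝ) (hh0 : 0 < h) (hhγ : h < γ) :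
    P {ω | (∑ i, E i ω) ≥ α} ≤
      ENNReal.ofReal ((1 + q * h / (γ - h)) ^ n / Real.exp (h * α)) := by
  have hmom : ∀ i, ∫⁻ ω, ENNReal.ofReal (exp (h * E i ω)) ∂P =
      ENNReal.ofReal (1 + q * h / (γ - h)) := fun i ↦ by
    rw [← lintegral_map (f := fun x ↦ ENNReal.ofReal (exp (h * x))) (by fun_prop) (hmeas i),
      hlaw i]
    exact lintegral_exp_mul_zeroExpMixture hq0.le hq1 hγ hhγ
  have hmom_nonneg : 0 ≤ 1 + q * h / (γ - h) := by
    have : 0 ≤ q * h / (γ - h) := div_nonneg (by positivity) (sub_pos.2 hhγ).le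
    linarith
  simpa using hindep.measure_sum_ge_le_of_lintegral_exp_mul_eq hmeas hh0.le hmom_nonneg hmom α

/-- (Light-tailed Chernoff bound on the outlier error) For i.i.d. `E₁, …, E_n` each with
law the mixture `(1 − q)·δ₀ + q·Exp(γ)`, for every `0 < h < γ` and every `α`,
`P(∑ Eᵢ ≥ α) ≤ (1 + q·h/(γ − h))^n / exp(h·α)`. -/
theorem light_tailed_chernoff {Ω : Type*} [MeasurableSpace Ω] (P : Measure Ω)
    [IsProbabilityMeasure P] (n : ℕ) (hn : 0 < n)
    (q γ : ℝ) (hq0 : 0 < q) (hq1 : q ≤ 1) (hγ : 0 < γ)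
    (E : Fin n → Ω → ℝ) (hmeas : ∀ i, Measurable (E i))
    (hindep : iIndepFun E P)
    (hlaw : ∀ i, Measure.map (E i) P =
      ENNReal.ofReal (1 - q) • Measure.dirac (0 : ℝ) +
        ENNReal.ofReal q • ProbabilityTheory.expMeasure γ)
    (h α : ℝ) (hh0 : 0 < h) (hhγ : h < γ) :
    P {ω | (∑ i, E i ω) ≥ α} ≤
      ENNReal.ofReal ((1 + q * h / (γ - h)) ^ n / Real.exp (h * α)) :=
  light_tailed_chernoff_general P n q γ hq0 hq1 hγ E hmeas hindep hlaw h α hh0 hhγ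
end

section
/- (Optimal choice of the Chernoff parameter) Let γ > 0, L > 0, 0 < q ≤ 1, and let n be a positive natural number. Set s = √(q·n/L) and h = γ/(s + 1), so that 0 < h < γ. Then n·q/(γ − h) + L/h = (√(q·n) + √L)² / γ. Consequently, since ln(1 + x) ≤ x for x > −1, the Chernoff exponent satisfies (n·ln(1 + q·h/(γ − h)) + L) / h ≤ (√(q·n) + √L)² / γ. -/
/-!
Writing `a = √(q·n)` and `b = √L`, the choice `s = a/b` makes `h = γ·b/(a + b)` and
`γ − h = γ·a/(a + b)`, i.e. it splits `γ` in the ratio `b : a`. This is the equality case of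
`a²/x + b²/y ≥ (a + b)²/(x + y)`, so `n·q/(γ − h) + L/h = a²/(γ − h) + b²/h = (a + b)²/γ`.
The exponent bound then follows from `ln(1 + x) ≤ x`.
-/

open Real

lemma mul_div_add_pos_and_lt {γ a b : ℝ} (hγ : 0 < γ) (ha : 0 < a) (hb : 0 < b) :
    0 < γ * b / (a + b) ∧ γ * b / (a + b) < γ := by
  refine ⟨by positivity, ?_⟩
  rw [div_lt_iff₀ (by positivity)]
  nlinarith

lemma sub_mul_div_add {a b : ℝ} (γ : ℝ) (hab : a + b ≠ 0) :
    γ - γ * b / (a + b) = γ * a / (a + b) := by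
  field_simp
  ring

lemma sq_div_add_sq_div_of_split {γ a b : ℝ} (hγ : γ ≠ 0) (hab : a + b ≠ 0) :
    a ^ 2 / (γ * a / (a + b)) + b ^ 2 / (γ * b / (a + b)) = (a + b) ^ 2 / γ := by
  field_simp

lemma chernoff_exponent_le {c q L γ h : ℝ} (hc : 0 ≤ c) (hq : 0 ≤ q) (hh : 0 < h)
    (hhγ : h < γ) :
    (c * log (1 + q * h / (γ - h)) + L) / h ≤ c * q / (γ - h) + L / h := by
  have hγh : 0 < γ - h := sub_pos.2 hhγ
  have hx : 0 ≤ q * h / (γ - h) := by positivity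
  have hlog : log (1 + q * h / (γ - h)) ≤ q * h / (γ - h) := by
    linarith [log_le_sub_one_of_pos (x := 1 + q * h / (γ - h)) (by linarith)]
  calc (c * log (1 + q * h / (γ - h)) + L) / h
      ≤ (c * (q * h / (γ - h)) + L) / h := by gcongr
    _ = c * q / (γ - h) + L / h := by field_simp

theorem optimal_chernoff_parameter_general (γ L q : ℝ) (hγ : 0 < γ) (hL : 0 < L)
    (hq0 : 0 < q) (n : ℕ) (hn : 0 < n)
    (s h : ℝ) (hs : s = Real.sqrt (q * n / L)) (hh : h = γ / (s + 1)) :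
    (0 < h ∧ h < γ) ∧
    n * q / (γ - h) + L / h = (Real.sqrt (q * n) + Real.sqrt L) ^ 2 / γ ∧
    (n * Real.log (1 + q * h / (γ - h)) + L) / h ≤
      (Real.sqrt (q * n) + Real.sqrt L) ^ 2 / γ := by
  have hqn : 0 < q * n := by positivity
  set a := √(q * n)
  set b := √L
  have ha : 0 < a := sqrt_pos.2 hqn
  have hb : 0 < b := sqrt_pos.2 hL
  have hh' : h = γ * b / (a + b) := by
    rw [hh, hs, sqrt_div' _ hL.le, div_add_one hb.ne', div_div_eq_mul_div]
  have hbounds : 0 < h ∧ h < γ := hh' ▸ mul_div_add_pos_and_lt hγ ha hb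
  have hsum : n * q / (γ - h) + L / h = (a + b) ^ 2 / γ := by
    rw [mul_comm, ← sq_sqrt hqn.le, ← sq_sqrt hL.le, hh', sub_mul_div_add γ (by positivity)]
    exact sq_div_add_sq_div_of_split hγ.ne' (by positivity)
  refine ⟨hbounds, hsum, hsum ▸ ?_⟩
  exact chernoff_exponent_le n.cast_nonneg hq0.le hbounds.1 hbounds.2

/-- (Optimal choice of the Chernoff parameter) With `s = √(q·n/L)` and `h = γ/(s + 1)`
we have `0 < h < γ`, the identity `n·q/(γ − h) + L/h = (√(q·n) + √L)²/γ`, and the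
Chernoff exponent bound `(n·ln(1 + q·h/(γ − h)) + L)/h ≤ (√(q·n) + √L)²/γ`. -/
theorem optimal_chernoff_parameter (γ L q : ℝ) (hγ : 0 < γ) (hL : 0 < L)
    (hq0 : 0 < q) (hq1 : q ≤ 1) (n : ℕ) (hn : 0 < n)
    (s h : ℝ) (hs : s = Real.sqrt (q * n / L)) (hh : h = γ / (s + 1)) :
    (0 < h ∧ h < γ) ∧
    n * q / (γ - h) + L / h = (Real.sqrt (q * n) + Real.sqrt L) ^ 2 / γ ∧
    (n * Real.log (1 + q * h / (γ - h)) + L) / h ≤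
      (Real.sqrt (q * n) + Real.sqrt L) ^ 2 / γ :=
  optimal_chernoff_parameter_general γ L q hγ hL hq0 n hn s h hs hh
end
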